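/- (First derivative bound for the eigenvalue.) Let d ≥ 1. Let H : ℝ → Matrix (Fin d) (Fin d) ℂ be differentiable on [0,1] with each H(s) Hermitian, let Ψ : ℝ → EuclideanSpace ℂ (Fin d) be differentiable on [0,1] with ‖Ψ(s)‖ = 1, and let γ : ℝ → ℝ be differentiable on [0,1], such that H(s) Ψ(s) = γ(s) Ψ(s) for all s ∈ [0,1]. Then for every s ∈ [0,1], |γ'(s)| ≤ ‖H'(s)‖. -/

import Mathlib

/-!
Differentiating `⟪Ψ, H Ψ⟫ = γ` gives `γ' = ⟪Ψ, H' Ψ⟫ + ⟪Ψ', H Ψ⟫ + ⟪Ψ, H Ψ'⟫`. Since `H` is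
Hermitian, the last two terms equal `γ (⟪Ψ', Ψ⟫ + ⟪Ψ, Ψ'⟫)`, which is `γ` times the derivative
of `‖Ψ‖² = 1`, hence zero. So `γ' = ⟪Ψ, H' Ψ⟫` (Hellmann–Feynman), and Cauchy–Schwarz
bounds it by `‖H'‖`. At the endpoints of `[0, 1]` the derivatives are compared within the
interval, where they are still unique.
-/

/-- The continuous linear map on Euclidean space associated to a matrix;
its operator norm is the operator norm induced by the Euclidean norm. -/
noncomputable def opCLM {d : ℕ} (A : Matrix (Fin d) (Fin d) ℂ) :
    EuclideanSpace ℂ (Fin d) →L[ℂ] EuclideanSpace ℂ (Fin d) :=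
  Matrix.toEuclideanCLM (𝕜 := ℂ) A

section
variable {𝕜 E F : Type*} [NontriviallyNormedField 𝕜] [NormedAlgebra ℝ 𝕜]
  [NormedAddCommGroup E] [NormedSpace 𝕜 E] [NormedSpace ℝ E] [IsScalarTower ℝ 𝕜 E]
  [NormedAddCommGroup F] [NormedSpace 𝕜 F] [NormedSpace ℝ F] [IsScalarTower ℝ 𝕜 F]

theorem HasDerivWithinAt.clm_apply_of_isScalarTower {T : ℝ → E →L[𝕜] F} {T' : E →L[𝕜] F}
    {u : ℝ → E} {u' : E} {s : Set ℝ} {x : ℝ}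
    (hT : HasDerivWithinAt T T' s x) (hu : HasDerivWithinAt u u' s x) :
    HasDerivWithinAt (fun t => T t (u t)) (T' (u x) + T x u') s x :=
  ((ContinuousLinearMap.restrictScalarsL 𝕜 E F ℝ ℝ).hasFDerivAt.comp_hasDerivWithinAt x
    hT).clm_apply hu

end

section
variable {𝕜 E : Type*} [RCLike 𝕜] [NormedAddCommGroup E] [InnerProductSpace 𝕜 E]

local notation "⟪" x ", " y "⟫" => inner 𝕜 x y

theorem norm_inner_apply_le_opNorm (T : E →L[𝕜] E) {v : E} (hv : ‖v‖ = 1) :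
    ‖⟪v, T v⟫‖ ≤ ‖T‖ :=
  calc ‖⟪v, T v⟫‖ ≤ ‖v‖ * (‖T‖ * ‖v‖) :=
        (norm_inner_le_norm _ _).trans (mul_le_mul_of_nonneg_left (T.le_opNorm v) (norm_nonneg v))
    _ = ‖T‖ := by rw [hv]; ring

variable [NormedSpace ℝ E]

theorem inner_add_inner_eq_zero_of_norm_eq_const {Ψ : ℝ → E} {Ψ' : E} {s : Set ℝ} {x r : ℝ}
    (hs : UniqueDiffWithinAt ℝ s x) (hx : x ∈ s) (hΨ : HasDerivWithinAt Ψ Ψ' s x)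
    (hnorm : ∀ t ∈ s, ‖Ψ t‖ = r) :
    ⟪Ψ x, Ψ'⟫ + ⟪Ψ', Ψ x⟫ = 0 := by
  have hconst : ∀ t ∈ s, ⟪Ψ t, Ψ t⟫ = (r : 𝕜) ^ 2 := fun t ht => by
    rw [inner_self_eq_norm_sq_to_K, hnorm t ht]
  exact hs.eq_deriv s (hΨ.inner 𝕜 hΨ)
    ((hasDerivWithinAt_const x s _).congr hconst (hconst x hx))

variable [IsScalarTower ℝ 𝕜 E]

theorem hasDerivWithinAt_eigenvalue_eq_inner {T : ℝ → E →L[𝕜] E} {T' : E →L[𝕜] E}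
    {Ψ : ℝ → E} {Ψ' : E} {γ : ℝ → ℝ} {γ' : ℝ} {s : Set ℝ} {x : ℝ}
    (hs : UniqueDiffWithinAt ℝ s x) (hx : x ∈ s)
    (hT : HasDerivWithinAt T T' s x) (hsym : (T x : E →ₗ[𝕜] E).IsSymmetric)
    (hΨ : HasDerivWithinAt Ψ Ψ' s x) (hnorm : ∀ t ∈ s, ‖Ψ t‖ = 1)
    (hγ : HasDerivWithinAt γ γ' s x) (heig : ∀ t ∈ s, T t (Ψ t) = (γ t : 𝕜) • Ψ t) :
    (γ' : 𝕜) = ⟪Ψ x, T' (Ψ x)⟫ := by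
  have hform : ∀ t ∈ s, ⟪Ψ t, T t (Ψ t)⟫ = (γ t : 𝕜) := fun t ht => by
    rw [heig t ht, inner_smul_right, inner_self_eq_norm_sq_to_K, hnorm t ht]
    simp
  have hderiv := hs.eq_deriv s
    ((RCLike.ofRealCLM.hasFDerivAt.comp_hasDerivWithinAt x hγ).congr hform (hform x hx))
    (hΨ.inner 𝕜 (hT.clm_apply_of_isScalarTower hΨ))
  have hsym' : ⟪Ψ x, T x Ψ'⟫ = ⟪T x (Ψ x), Ψ'⟫ := (hsym _ _).symm
  rw [← RCLike.ofRealCLM_apply, hderiv, inner_add_right, hsym', heig x hx, inner_smul_left,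
    inner_smul_right, RCLike.conj_ofReal, add_assoc, ← mul_add,
    inner_add_inner_eq_zero_of_norm_eq_const hs hx hΨ hnorm, mul_zero, add_zero]

theorem abs_eigenvalue_deriv_le_opNorm {T : ℝ → E →L[𝕜] E} {T' : E →L[𝕜] E}
    {Ψ : ℝ → E} {Ψ' : E} {γ : ℝ → ℝ} {γ' : ℝ} {s : Set ℝ} {x : ℝ}
    (hs : UniqueDiffWithinAt ℝ s x) (hx : x ∈ s)
    (hT : HasDerivWithinAt T T' s x) (hsym : (T x : E →ₗ[𝕜] E).IsSymmetric)
    (hΨ : HasDerivWithinAt Ψ Ψ' s x) (hnorm : ∀ t ∈ s, ‖Ψ t‖ = 1)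
    (hγ : HasDerivWithinAt γ γ' s x) (heig : ∀ t ∈ s, T t (Ψ t) = (γ t : 𝕜) • Ψ t) :
    |γ'| ≤ ‖T'‖ := by
  rw [← RCLike.norm_ofReal (K := 𝕜),
    hasDerivWithinAt_eigenvalue_eq_inner hs hx hT hsym hΨ hnorm hγ heig]
  exact norm_inner_apply_le_opNorm T' (hnorm x hx)

end

theorem isSymmetric_opCLM {d : ℕ} {A : Matrix (Fin d) (Fin d) ℂ} (hA : A.IsHermitian) :
    (opCLM A : EuclideanSpace ℂ (Fin d) →ₗ[ℂ] EuclideanSpace ℂ (Fin d)).IsSymmetric := by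
  rw [opCLM, Matrix.coe_toEuclideanCLM_eq_toEuclideanLin]
  exact Matrix.isSymmetric_toEuclideanLin_iff.mpr hA

theorem eigenvalue_first_deriv_bound_general {d : ℕ}
    (H H' : ℝ → Matrix (Fin d) (Fin d) ℂ)
    (hHd : ∀ s ∈ Set.Icc (0:ℝ) 1, HasDerivAt (fun t => opCLM (H t)) (opCLM (H' s)) s)
    (hherm : ∀ s ∈ Set.Icc (0:ℝ) 1, (H s).IsHermitian)
    (Ψ Ψ' : ℝ → EuclideanSpace ℂ (Fin d))
    (hΨd : ∀ s ∈ Set.Icc (0:ℝ) 1, HasDerivAt Ψ (Ψ' s) s)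
    (hΨnorm : ∀ s ∈ Set.Icc (0:ℝ) 1, ‖Ψ s‖ = 1)
    (γ γ' : ℝ → ℝ)
    (hγd : ∀ s ∈ Set.Icc (0:ℝ) 1, HasDerivAt γ (γ' s) s)
    (heig : ∀ s ∈ Set.Icc (0:ℝ) 1, opCLM (H s) (Ψ s) = (γ s : ℂ) • Ψ s) :
    ∀ s ∈ Set.Icc (0:ℝ) 1, |γ' s| ≤ ‖opCLM (H' s)‖ := by
  intro s hs
  exact abs_eigenvalue_deriv_le_opNorm (uniqueDiffOn_Icc one_pos s hs) hs
    (hHd s hs).hasDerivWithinAt (isSymmetric_opCLM (hherm s hs)) (hΨd s hs).hasDerivWithinAt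
    hΨnorm (hγd s hs).hasDerivWithinAt heig

/-- **First derivative bound for the eigenvalue.** -/
theorem eigenvalue_first_deriv_bound {d : ℕ} (hd : 1 ≤ d)
    (H H' : ℝ → Matrix (Fin d) (Fin d) ℂ)
    (hHd : ∀ s ∈ Set.Icc (0:ℝ) 1, HasDerivAt (fun t => opCLM (H t)) (opCLM (H' s)) s)
    (hherm : ∀ s ∈ Set.Icc (0:ℝ) 1, (H s).IsHermitian)
    (Ψ Ψ' : ℝ → EuclideanSpace ℂ (Fin d))
    (hΨd : ∀ s ∈ Set.Icc (0:ℝ) 1, HasDerivAt Ψ (Ψ' s) s)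
    (hΨnorm : ∀ s ∈ Set.Icc (0:ℝ) 1, ‖Ψ s‖ = 1)
    (γ γ' : ℝ → ℝ)
    (hγd : ∀ s ∈ Set.Icc (0:ℝ) 1, HasDerivAt γ (γ' s) s)
    (heig : ∀ s ∈ Set.Icc (0:ℝ) 1, opCLM (H s) (Ψ s) = (γ s : ℂ) • Ψ s) :
    ∀ s ∈ Set.Icc (0:ℝ) 1, |γ' s| ≤ ‖opCLM (H' s)‖ :=
  eigenvalue_first_deriv_bound_general H H' hHd hherm Ψ Ψ' hΨd hΨnorm γ γ' hγd heig
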